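/- For the three-hop line network with equal capacity C, the latency gain ℓ(λ_min) = t*_FD/t*_HD = 8(C-2λ_min)/(5(C-4λ_min)) for λ_min ≤ C/7 and 2(C-3λ_min)/(C-4λ_min) for C/7 < λ_min < C/4; ℓ is increasing in λ_min on (0, C/4), ℓ(C/10) = 32/15 ≈ 2.13, and ℓ → ∞ as λ_min → C/4. -/

import Mathlib

open Set Filter

/-- Latency gain of the three-hop line network with equal capacity `C`. -/
noncomputable def lineGain (C lam : ℝ) : ℝ :=
  if lam ≤ C / 7 then 8 * (C - 2 * lam) / (5 * (C - 4 * lam))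
  else 2 * (C - 3 * lam) / (C - 4 * lam)

lemma lineGain_mono (C : ℝ) (hC : 0 < C) :
    StrictMonoOn (lineGain C) (Ioo (0:ℝ) (C / 4)) := by
  rintro a ⟨ha0, ha4⟩ b ⟨hb0, hb4⟩ hab
  have hda : 0 < C - 4 * a := by linarith
  have hdb : 0 < C - 4 * b := by linarith
  unfold lineGain
  split_ifs with h1 h2 h2
  · rw [div_lt_div_iff₀ (by positivity) (by positivity)]
    nlinarith
  · -- a ≤ C/7 < b
    have hA : 8 * (C - 2 * a) / (5 * (C - 4 * a)) ≤ 8 / 3 := by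
      rw [div_le_div_iff₀ (by positivity) (by norm_num)]
      nlinarith
    have hB : (8:ℝ) / 3 < 2 * (C - 3 * b) / (C - 4 * b) := by
      rw [div_lt_div_iff₀ (by norm_num) hdb]
      nlinarith
    linarith
  · linarith
  · rw [div_lt_div_iff₀ hda hdb]
    nlinarith

/-- For the three-hop line network with equal capacity `C`: the latency gain
`ℓ(λ) = t*_FD/t*_HD` equals `8(C-2λ)/(5(C-4λ))` for `λ ≤ C/7` and
`2(C-3λ)/(C-4λ)` for `C/7 < λ < C/4`; it is (strictly) increasing in `λ` on
`(0, C/4)`; `ℓ(C/10) = 32/15`; and `ℓ(λ) → ∞` as `λ → C/4⁻`. -/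
theorem three_hop_latency_gain (C : ℝ) (hC : 0 < C) :
    (∀ lam ∈ Ioo (0:ℝ) (C / 4),
      lineGain C lam =
        (if lam ≤ C / 7 then (C - 2 * lam) / 5 else (C - 3 * lam) / 4) /
          ((C - 4 * lam) / 8)) ∧
    StrictMonoOn (lineGain C) (Ioo (0:ℝ) (C / 4)) ∧
    lineGain C (C / 10) = 32 / 15 ∧
    Tendsto (lineGain C) (nhdsWithin (C / 4) (Iio (C / 4))) atTop := by
  refine ⟨?_, lineGain_mono C hC, ?_, ?_⟩
  · rintro lam ⟨h0, h4⟩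
    have hd : C - 4 * lam ≠ 0 := by intro h; linarith
    unfold lineGain
    split_ifs
    · field_simp
    · field_simp; ring
  · have h : C / 10 ≤ C / 7 := by linarith
    simp only [lineGain, if_pos h]
    have h2 : C - 2 * (C / 10) = 4 * C / 5 := by ring
    have h4 : C - 4 * (C / 10) = 3 * C / 5 := by ring
    rw [h2, h4]
    field_simp
    ring
  · have hev : ∀ᶠ lam in nhdsWithin (C / 4) (Iio (C / 4)),
        lineGain C lam = 2 * (C - 3 * lam) / (C - 4 * lam) := by
      filter_upwards [eventually_nhdsWithin_of_eventually_nhds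
        (eventually_gt_nhds (show C / 7 < C / 4 by linarith))] with lam hlam
      simp [lineGain, not_le.mpr hlam]
    refine Tendsto.congr' (hev.mono fun _ h => h.symm) ?_
    have hnum : Tendsto (fun lam => 2 * (C - 3 * lam))
        (nhdsWithin (C / 4) (Iio (C / 4))) (nhds (C / 2)) := by
      have : Tendsto (fun lam : ℝ => 2 * (C - 3 * lam)) (nhds (C / 4))
          (nhds (2 * (C - 3 * (C / 4)))) :=
        (continuous_const.mul (continuous_const.sub (continuous_const.mul continuous_id))).tendsto _
      have := this.mono_left (nhdsWithin_le_nhds (s := Iio (C / 4)))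
      convert this using 2
      ring
    have hden : Tendsto (fun lam => (C - 4 * lam)⁻¹)
        (nhdsWithin (C / 4) (Iio (C / 4))) atTop := by
      apply tendsto_inv_nhdsGT_zero.comp
      rw [tendsto_nhdsWithin_iff]
      constructor
      · have : Tendsto (fun lam : ℝ => C - 4 * lam) (nhds (C / 4))
            (nhds (C - 4 * (C / 4))) :=
          (continuous_const.sub (continuous_const.mul continuous_id)).tendsto _
        have h0 : C - 4 * (C / 4) = 0 := by ring
        rw [h0] at this
        exact this.mono_left nhdsWithin_le_nhds
      · filter_upwards [self_mem_nhdsWithin] with lam hlam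
        simp only [mem_Ioi]
        exact sub_pos.mpr (by linarith [mem_Iio.mp hlam])
    have := Tendsto.pos_mul_atTop (by positivity) hnum hden
    simpa [div_eq_mul_inv] using this
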